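/- Let 1 ≤ d < n be integers, let P ∈ ℝ^{d×n} have invertible leading d×d block P_I, set Q := P_I^{-1} P_II, and let α ≥ β ≥ 0. Then there exists a constant C > 0, independent of the coefficient family, such that for every family c : ℤ^n → ℂ, (Σ_{k∈ℤ^n} ‖P k‖^{2α} |c_k|²)^{1/2} + (Σ_{k∈ℤ^n} ‖k‖^{2β} |c_k|²)^{1/2} ≤ C (Σ_{k∈ℤ^n} (‖k_I + Q k_II‖^{2α} + ‖k_II‖^{2β}) |c_k|²)^{1/2} (equality of both sides being ∞ allowed). -/

import Mathlib

open scoped ENNReal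

/-- Euclidean norm of a vector in `ℝ^m`. -/
noncomputable def euclNorm {m : ℕ} (x : Fin m → ℝ) : ℝ :=
  ‖(EuclideanSpace.equiv (Fin m) ℝ).symm x‖

/-- Mixed weight `‖k_I + Q k_II‖^(2α) + ‖k_II‖^(2β)` (real powers, `0⁰ = 1`). -/
noncomputable def wMix (d m : ℕ) (Q : Matrix (Fin d) (Fin m) ℝ) (α β : ℝ)
    (k : Fin (d + m) → ℤ) : ℝ :=
  euclNorm ((fun i => (k (Fin.castAdd m i) : ℝ)) +
      Q.mulVec fun j => (k (Fin.natAdd d j) : ℝ)) ^ (2 * α) +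
    euclNorm (fun j => (k (Fin.natAdd d j) : ℝ)) ^ (2 * β)

/-- Weight `‖P k‖^(2α)`. -/
noncomputable def wP (d m : ℕ) (P : Matrix (Fin d) (Fin (d + m)) ℝ) (α : ℝ)
    (k : Fin (d + m) → ℤ) : ℝ :=
  euclNorm (P.mulVec fun i => (k i : ℝ)) ^ (2 * α)

/-- Weight `‖k‖^(2β)`. -/
noncomputable def wFull (d m : ℕ) (β : ℝ) (k : Fin (d + m) → ℤ) : ℝ :=
  euclNorm (fun i => (k i : ℝ)) ^ (2 * β)

open scoped Matrix

/-! With `v = ‖k_I + Q k_II‖` and `w = ‖k_II‖` we have `P k = P_I (k_I + Q k_II)`, so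
`‖P k‖ ≲ v` and `‖k‖ ≤ ‖k_I‖ + w ≲ max v w`. The first bound gives the `α`-weight directly. For
the `β`-weight the exponent `2β` on `v` has to be traded for `2α ≥ 2β`, and this is where the
lattice enters: if `w < 1` then `k_II = 0`, and then `v = ‖k_I‖ < 1` forces `v = 0`. So `v` is
either `0` or at least `1` while `w < 1`, which gives `max v w ^ (2β) ≤ v ^ (2α) + w ^ (2β)`.
Summing the pointwise weight bounds against `|c_k|²` gives the theorem. -/

lemma euclNorm_eq_norm {m : ℕ} (x : Fin m → ℝ) : euclNorm x = ‖WithLp.toLp 2 x‖ := rfl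

lemma euclNorm_nonneg {m : ℕ} (x : Fin m → ℝ) : 0 ≤ euclNorm x := norm_nonneg _

lemma euclNorm_le_euclNorm_add_add {m : ℕ} (x y : Fin m → ℝ) :
    euclNorm x ≤ euclNorm (x + y) + euclNorm y := by
  simpa only [euclNorm_eq_norm, WithLp.toLp_add] using norm_le_add_norm_add _ _

lemma abs_le_euclNorm {m : ℕ} (x : Fin m → ℝ) (i : Fin m) : |x i| ≤ euclNorm x :=
  PiLp.norm_apply_le (WithLp.toLp 2 x) i

lemma sq_euclNorm {m : ℕ} (x : Fin m → ℝ) : euclNorm x ^ 2 = ∑ i, x i ^ 2 := by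
  rw [euclNorm_eq_norm, EuclideanSpace.norm_eq, Real.sq_sqrt (by positivity)]
  simp

lemma euclNorm_le_euclNorm_castAdd_add_euclNorm_natAdd {d m : ℕ} (x : Fin (d + m) → ℝ) :
    euclNorm x ≤
      euclNorm (fun i => x (Fin.castAdd m i)) + euclNorm (fun j => x (Fin.natAdd d j)) := by
  have hsq : euclNorm x ^ 2 =
      euclNorm (fun i => x (Fin.castAdd m i)) ^ 2 + euclNorm (fun j => x (Fin.natAdd d j)) ^ 2 := by
    simp only [sq_euclNorm, Fin.sum_univ_add]
  nlinarith [euclNorm_nonneg x, euclNorm_nonneg (fun i => x (Fin.castAdd m i)),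
    euclNorm_nonneg (fun j => x (Fin.natAdd d j))]

lemma eq_zero_of_euclNorm_intCast_lt_one {m : ℕ} {z : Fin m → ℤ}
    (h : euclNorm (fun i => (z i : ℝ)) < 1) : z = 0 := by
  funext i
  have hi : |(z i : ℝ)| < 1 := (abs_le_euclNorm _ i).trans_lt h
  exact_mod_cast Int.abs_lt_one_iff.mp (by exact_mod_cast hi)

lemma Matrix.exists_euclNorm_mulVec_le {a b : ℕ} (A : Matrix (Fin a) (Fin b) ℝ) :
    ∃ c : ℝ, 0 ≤ c ∧ ∀ y : Fin b → ℝ, euclNorm (A *ᵥ y) ≤ c * euclNorm y := by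
  open scoped Matrix.Norms.L2Operator in
  exact ⟨‖A‖, norm_nonneg A, fun y => A.l2_opNorm_mulVec (WithLp.toLp 2 y)⟩

lemma Matrix.mulVec_eq_mulVec_castAdd_add_mulVec_natAdd {R ι : Type*}
    [NonUnitalNonAssocSemiring R] {d m : ℕ} (P : Matrix ι (Fin (d + m)) R) (x : Fin (d + m) → R) :
    P *ᵥ x = P.submatrix id (Fin.castAdd m) *ᵥ (fun i => x (Fin.castAdd m i)) +
      P.submatrix id (Fin.natAdd d) *ᵥ (fun j => x (Fin.natAdd d j)) := by
  funext i
  simp only [Matrix.mulVec, dotProduct, Fin.sum_univ_add, Matrix.submatrix_apply, id, Pi.add_apply]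

lemma max_rpow_le_rpow_add_rpow {v w a b : ℝ} (hv : 0 ≤ v) (hw : 0 ≤ w) (hba : b ≤ a)
    (h : w < 1 → v < 1 → v = 0) : max v w ^ b ≤ v ^ a + w ^ b := by
  rcases le_total v w with hvw | hwv
  · rw [max_eq_right hvw]
    linarith [Real.rpow_nonneg hv a]
  rw [max_eq_left hwv]
  rcases lt_or_ge v 1 with hv1 | hv1
  · have hv0 : v = 0 := h (hwv.trans_lt hv1) hv1
    subst hv0
    rw [le_antisymm hwv hw]
    linarith [Real.rpow_nonneg le_rfl a]
  · linarith [Real.rpow_le_rpow_of_exponent_le hv1 hba, Real.rpow_nonneg hw b]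

lemma euclNorm_intCast_add_mulVec_eq_zero {d m : ℕ} (Q : Matrix (Fin d) (Fin m) ℝ)
    {z₁ : Fin d → ℤ} {z₂ : Fin m → ℤ} (h₂ : euclNorm (fun j => (z₂ j : ℝ)) < 1)
    (h₁ : euclNorm ((fun i => (z₁ i : ℝ)) + Q *ᵥ fun j => (z₂ j : ℝ)) < 1) :
    euclNorm ((fun i => (z₁ i : ℝ)) + Q *ᵥ fun j => (z₂ j : ℝ)) = 0 := by
  obtain rfl := eq_zero_of_euclNorm_intCast_lt_one h₂
  simp only [Pi.zero_apply, Int.cast_zero, ← Pi.zero_def, Matrix.mulVec_zero, add_zero] at h₁ ⊢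
  obtain rfl := eq_zero_of_euclNorm_intCast_lt_one h₁
  simp [euclNorm_eq_norm, ← Pi.zero_def]

section Weights

variable {d m : ℕ}

lemma exists_wFull_le_mul_wMix (Q : Matrix (Fin d) (Fin m) ℝ) (α β : ℝ) (hβ : 0 ≤ β)
    (hβα : β ≤ α) :
    ∃ K : ℝ, 0 < K ∧ ∀ k, wFull d m β k ≤ K * wMix d m Q α β k := by
  obtain ⟨c, hc0, hc⟩ := Q.exists_euclNorm_mulVec_le
  refine ⟨(c + 2) ^ (2 * β), Real.rpow_pos_of_pos (by linarith) _, fun k => ?_⟩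
  set kI : Fin d → ℝ := fun i => (k (Fin.castAdd m i) : ℝ)
  set kII : Fin m → ℝ := fun j => (k (Fin.natAdd d j) : ℝ)
  set v := euclNorm (kI + Q *ᵥ kII)
  set w := euclNorm kII
  have hv : 0 ≤ v := euclNorm_nonneg _
  have hw : 0 ≤ w := euclNorm_nonneg _
  have hk : euclNorm (fun i => (k i : ℝ)) ≤ (c + 2) * max v w :=
    calc euclNorm (fun i => (k i : ℝ)) ≤ euclNorm kI + w :=
          euclNorm_le_euclNorm_castAdd_add_euclNorm_natAdd _
      _ ≤ v + c * w + w := by linarith [euclNorm_le_euclNorm_add_add kI (Q *ᵥ kII), hc kII]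
      _ ≤ (c + 2) * max v w := by
          nlinarith [le_max_left v w, le_max_right v w]
  calc wFull d m β k ≤ ((c + 2) * max v w) ^ (2 * β) :=
        Real.rpow_le_rpow (euclNorm_nonneg _) hk (by linarith)
    _ = (c + 2) ^ (2 * β) * max v w ^ (2 * β) :=
        Real.mul_rpow (by linarith) (hv.trans (le_max_left v w))
    _ ≤ (c + 2) ^ (2 * β) * wMix d m Q α β k := by
        gcongr
        exact max_rpow_le_rpow_add_rpow hv hw (by linarith)
          (euclNorm_intCast_add_mulVec_eq_zero Q)

lemma exists_wP_le_mul_wMix {Q : Matrix (Fin d) (Fin m) ℝ} {α : ℝ} (β : ℝ)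
    (P : Matrix (Fin d) (Fin (d + m)) ℝ)
    (hPQ : P.submatrix id (Fin.natAdd d) = P.submatrix id (Fin.castAdd m) * Q) (hα : 0 ≤ α) :
    ∃ K : ℝ, 0 ≤ K ∧ ∀ k, wP d m P α k ≤ K * wMix d m Q α β k := by
  obtain ⟨c, hc0, hc⟩ := (P.submatrix id (Fin.castAdd m)).exists_euclNorm_mulVec_le
  refine ⟨c ^ (2 * α), Real.rpow_nonneg hc0 _, fun k => ?_⟩
  set v := euclNorm ((fun i => (k (Fin.castAdd m i) : ℝ)) + Q *ᵥ fun j => (k (Fin.natAdd d j) : ℝ))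
  have hPk : euclNorm (P *ᵥ fun i => (k i : ℝ)) ≤ c * v := by
    rw [P.mulVec_eq_mulVec_castAdd_add_mulVec_natAdd, hPQ, ← Matrix.mulVec_mulVec,
      ← Matrix.mulVec_add]
    exact hc _
  calc wP d m P α k ≤ (c * v) ^ (2 * α) :=
        Real.rpow_le_rpow (euclNorm_nonneg _) hPk (by linarith)
    _ = c ^ (2 * α) * v ^ (2 * α) := Real.mul_rpow hc0 (euclNorm_nonneg _)
    _ ≤ c ^ (2 * α) * wMix d m Q α β k := by
        gcongr
        exact le_add_of_nonneg_right (Real.rpow_nonneg (euclNorm_nonneg _) _)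

end Weights

lemma tsum_ofReal_mul_rpow_half_le {ι : Type*} {w v a : ι → ℝ} {K : ℝ} (hK : 0 ≤ K)
    (hwv : ∀ k, w k ≤ K * v k) (ha : ∀ k, 0 ≤ a k) :
    (∑' k, ENNReal.ofReal (w k * a k)) ^ ((1 : ℝ) / 2) ≤
      ENNReal.ofReal √K * (∑' k, ENNReal.ofReal (v k * a k)) ^ ((1 : ℝ) / 2) := by
  have hsum : ∑' k, ENNReal.ofReal (w k * a k) ≤
      ENNReal.ofReal K * ∑' k, ENNReal.ofReal (v k * a k) := by
    rw [← ENNReal.tsum_mul_left]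
    refine ENNReal.tsum_le_tsum fun k => ?_
    rw [← ENNReal.ofReal_mul hK, ← mul_assoc]
    exact ENNReal.ofReal_le_ofReal (mul_le_mul_of_nonneg_right (hwv k) (ha k))
  calc _ ≤ (ENNReal.ofReal K * ∑' k, ENNReal.ofReal (v k * a k)) ^ ((1 : ℝ) / 2) :=
        ENNReal.rpow_le_rpow hsum (by norm_num)
    _ = _ := by
        rw [ENNReal.mul_rpow_of_nonneg _ _ (by norm_num),
          ENNReal.ofReal_rpow_of_nonneg hK (by norm_num), Real.sqrt_eq_rpow]

theorem stmt3_general (d m : ℕ)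
    (P : Matrix (Fin d) (Fin (d + m)) ℝ)
    (PI : Matrix (Fin d) (Fin d) ℝ) (hPI : PI = P.submatrix id (Fin.castAdd m))
    (PII : Matrix (Fin d) (Fin m) ℝ) (hPII : PII = P.submatrix id (Fin.natAdd d))
    (hinv : IsUnit PI)
    (Q : Matrix (Fin d) (Fin m) ℝ) (hQ : Q = PI⁻¹ * PII)
    (α β : ℝ) (hβ : 0 ≤ β) (hαβ : β ≤ α) :
    ∃ C : ℝ, 0 < C ∧ ∀ c : (Fin (d + m) → ℤ) → ℂ,
      (∑' k : Fin (d + m) → ℤ, ENNReal.ofReal (wP d m P α k * ‖c k‖ ^ 2)) ^ ((1 : ℝ) / 2) +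
        (∑' k : Fin (d + m) → ℤ, ENNReal.ofReal (wFull d m β k * ‖c k‖ ^ 2)) ^ ((1 : ℝ) / 2) ≤
      ENNReal.ofReal C *
        (∑' k : Fin (d + m) → ℤ,
            ENNReal.ofReal (wMix d m Q α β k * ‖c k‖ ^ 2)) ^ ((1 : ℝ) / 2) := by
  have hPQ : P.submatrix id (Fin.natAdd d) = P.submatrix id (Fin.castAdd m) * Q := by
    rw [hQ, ← hPI, ← hPII,
      Matrix.mul_nonsing_inv_cancel_left _ _ (PI.isUnit_iff_isUnit_det.mp hinv)]
  obtain ⟨K₁, hK₁, hP⟩ := exists_wP_le_mul_wMix β P hPQ (hβ.trans hαβ)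
  obtain ⟨K₂, hK₂, hFull⟩ := exists_wFull_le_mul_wMix Q α β hβ hαβ
  refine ⟨√K₁ + √K₂, add_pos_of_nonneg_of_pos (Real.sqrt_nonneg _) (Real.sqrt_pos.mpr hK₂),
    fun c => ?_⟩
  rw [ENNReal.ofReal_add (Real.sqrt_nonneg _) (Real.sqrt_nonneg _), add_mul]
  exact add_le_add (tsum_ofReal_mul_rpow_half_le hK₁ hP fun k => sq_nonneg _)
    (tsum_ofReal_mul_rpow_half_le hK₂.le hFull fun k => sq_nonneg _)

/-- `|u|_α + |U|_{H^β} ≤ C |u|_{α,β}` for all coefficient families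
`c : ℤ^n → ℂ` (value `∞` allowed on both sides). -/
theorem stmt3 (d m : ℕ) (hd : 1 ≤ d) (hm : 1 ≤ m)
    (P : Matrix (Fin d) (Fin (d + m)) ℝ)
    (PI : Matrix (Fin d) (Fin d) ℝ) (hPI : PI = P.submatrix id (Fin.castAdd m))
    (PII : Matrix (Fin d) (Fin m) ℝ) (hPII : PII = P.submatrix id (Fin.natAdd d))
    (hinv : IsUnit PI)
    (Q : Matrix (Fin d) (Fin m) ℝ) (hQ : Q = PI⁻¹ * PII)
    (α β : ℝ) (hβ : 0 ≤ β) (hαβ : β ≤ α) :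
    ∃ C : ℝ, 0 < C ∧ ∀ c : (Fin (d + m) → ℤ) → ℂ,
      (∑' k : Fin (d + m) → ℤ, ENNReal.ofReal (wP d m P α k * ‖c k‖ ^ 2)) ^ ((1 : ℝ) / 2) +
        (∑' k : Fin (d + m) → ℤ, ENNReal.ofReal (wFull d m β k * ‖c k‖ ^ 2)) ^ ((1 : ℝ) / 2) ≤
      ENNReal.ofReal C *
        (∑' k : Fin (d + m) → ℤ,
            ENNReal.ofReal (wMix d m Q α β k * ‖c k‖ ^ 2)) ^ ((1 : ℝ) / 2) :=
  stmt3_general d m P PI hPI PII hPII hinv Q hQ α β hβ hαβ
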